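/- Let Y and Δ be positive semidefinite operators on a finite-dimensional complex Hilbert space and let π̃ be a density matrix with π̃ ≤ Y + Δ. Let T := Y^{1/2}·((Y+Δ)^{1/2})^{+}, where ((Y+Δ)^{1/2})^{+} denotes the Moore–Penrose pseudoinverse of (Y+Δ)^{1/2}. Then T·π̃·T† ≤ Y and tr[(I − T†T)·π̃] ≤ tr(Δ); in particular tr[T†T·π̃] ≥ 1 − tr(Δ). -/

import Mathlib

open scoped BigOperators Kronecker ComplexOrder

noncomputable section

namespace EquivEnsembles

/-! ### Generic linear-algebraic notions -/

variable {ι : Type*} [Fintype ι] [DecidableEq ι]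

/-- The operator norm of a matrix, via its action on Euclidean space. -/
def opNorm (A : Matrix ι ι ℂ) : ℝ := ‖Matrix.toEuclideanCLM (𝕜 := ℂ) A‖

/-- The square root of a positive semidefinite matrix, as `Matrix.PosSemidef.sqrt` was defined
in Mathlib of December 2024 (removed since). -/
protected def _root_.Matrix.PosSemidef.sqrt {n 𝕜 : Type*} [Fintype n] [RCLike 𝕜] [DecidableEq n]
    {A : Matrix n n 𝕜} (hA : A.PosSemidef) : Matrix n n 𝕜 :=
  (hA.1.eigenvectorUnitary : Matrix n n 𝕜) *
    Matrix.diagonal (fun i => ((Real.sqrt (hA.1.eigenvalues i) : ℝ) : 𝕜)) *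
    (star hA.1.eigenvectorUnitary : Matrix n n 𝕜)

/-- The trace norm `‖A‖₁ = tr √(AᴴA)` of a matrix. -/
def traceNorm (A : Matrix ι ι ℂ) : ℝ :=
  ((Matrix.posSemidef_conjTranspose_mul_self A).sqrt).trace.re

/-- A density matrix: positive semidefinite with unit trace. -/
def IsDensity (ρ : Matrix ι ι ℂ) : Prop := ρ.PosSemidef ∧ ρ.trace = 1

/-- Functional calculus for (Hermitian) matrices, via the spectral theorem;
junk value `0` on non-Hermitian matrices. -/
def mfun (f : ℝ → ℝ) (A : Matrix ι ι ℂ) : Matrix ι ι ℂ :=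
  if h : A.IsHermitian then
    (h.eigenvectorUnitary : Matrix ι ι ℂ) *
      Matrix.diagonal (fun i => (f (h.eigenvalues i) : ℂ)) *
      (star h.eigenvectorUnitary : Matrix ι ι ℂ)
  else 0

/-- Matrix logarithm, base 2. -/
def mlog2 (A : Matrix ι ι ℂ) : Matrix ι ι ℂ := mfun (Real.logb 2) A

/-- Matrix logarithm, base e. -/
def mln (A : Matrix ι ι ℂ) : Matrix ι ι ℂ := mfun Real.log A

/-- Moore-Penrose pseudoinverse (of a Hermitian matrix; junk value `0` otherwise). -/
def hpinv (A : Matrix ι ι ℂ) : Matrix ι ι ℂ := mfun (fun x => x⁻¹) A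

/-- Quantum relative entropy `S(τ‖ρ) = tr (τ (log τ − log ρ))` (base-2 logarithms). -/
def relEnt (τ ρ : Matrix ι ι ℂ) : ℝ := (τ * (mlog2 τ - mlog2 ρ)).trace.re

/-- Von Neumann entropy (base-2 logarithm). -/
def vnEnt (τ : Matrix ι ι ℂ) : ℝ := -(τ * mlog2 τ).trace.re

/-- Von Neumann entropy (natural logarithm). -/
def vnEntNat (τ : Matrix ι ι ℂ) : ℝ := -(τ * mln τ).trace.re

/-- Max-relative entropy `S_max(τ‖ρ) = min {λ : τ ≤ 2^λ ρ}`. -/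
def smax (τ ρ : Matrix ι ι ℂ) : ℝ :=
  sInf {lam : ℝ | (((2:ℝ) ^ lam) • ρ - τ).PosSemidef}

/-- The Gibbs state `e^{-H/T}/Z(T)` of a Hamiltonian `H` at temperature `T`. -/
def gibbs (H : Matrix ι ι ℂ) (T : ℝ) : Matrix ι ι ℂ :=
  ((NormedSpace.exp ((-(T : ℂ))⁻¹ • H)).trace)⁻¹ • NormedSpace.exp ((-(T : ℂ))⁻¹ • H)

/-- The partition function `Z(T) = tr e^{-H/T}`. -/
def partZ (H : Matrix ι ι ℂ) (T : ℝ) : ℂ := (NormedSpace.exp ((-(T : ℂ))⁻¹ • H)).trace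

/-- Energy density `u(T)` (with `N` sites). -/
def uT (H : Matrix ι ι ℂ) (T : ℝ) (N : ℕ) : ℝ := (H * gibbs H T).trace.re / N

/-- Specific heat capacity `c(T)` (with `N` sites). -/
def cT (H : Matrix ι ι ℂ) (T : ℝ) (N : ℕ) : ℝ :=
  ((H * H * gibbs H T).trace.re - ((H * gibbs H T).trace.re) ^ 2) / (N * T ^ 2)

/-- Entropy density `s(T)` (with `N` sites, natural logarithm). -/
def sT (H : Matrix ι ι ℂ) (T : ℝ) (N : ℕ) : ℝ := vnEntNat (gibbs H T) / N

/-- The rank-one spectral projection `|ν⟩⟨ν|` onto the `ν`-th eigenvector of a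
Hermitian matrix. -/
def eigProj {A : Matrix ι ι ℂ} (hA : A.IsHermitian) (ν : ι) : Matrix ι ι ℂ :=
  (hA.eigenvectorUnitary : Matrix ι ι ℂ) * Matrix.single ν ν 1 *
    (star hA.eigenvectorUnitary : Matrix ι ι ℂ)

/-- The microcanonical index set `M_{e,δ} = {ν : |E_ν − eN| ≤ δ√N}`. -/
def microSet {A : Matrix ι ι ℂ} (hA : A.IsHermitian) (e δ : ℝ) (N : ℕ) : Finset ι :=
  Finset.univ.filter fun ν => |hA.eigenvalues ν - e * N| ≤ δ * Real.sqrt N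

/-- The microcanonical state `τ_{e,δ}`. -/
def microState {A : Matrix ι ι ℂ} (hA : A.IsHermitian) (e δ : ℝ) (N : ℕ) : Matrix ι ι ℂ :=
  (((microSet hA e δ N).card : ℂ))⁻¹ • ∑ ν ∈ microSet hA e δ N, eigProj hA ν

/-- The restricted partition function `Z(T,e,δ) = Σ_{ν ∈ M_{e,δ}} e^{−E_ν/T}`. -/
def partZmicro {A : Matrix ι ι ℂ} (hA : A.IsHermitian) (T e δ : ℝ) (N : ℕ) : ℝ :=
  ∑ ν ∈ microSet hA e δ N, Real.exp (-(hA.eigenvalues ν) / T)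

/-- `τ` is supported on the span of the eigenvectors indexed by `M`. -/
def SupportedOn {A : Matrix ι ι ℂ} (hA : A.IsHermitian) (M : Finset ι)
    (τ : Matrix ι ι ℂ) : Prop :=
  (∑ ν ∈ M, eigProj hA ν) * τ * (∑ ν ∈ M, eigProj hA ν) = τ


/-! ### Many-body systems on a set `V` of sites -/

variable {V : Type*} [Fintype V] [DecidableEq V] {D : ℕ}

/-- Basis configurations of `⊗_{v ∈ V} ℂ^D`. -/
abbrev Cfg (V : Type*) (D : ℕ) := V → Fin D

/-- Basis configurations on a region `X ⊆ V`. -/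
abbrev CfgOn (D : ℕ) {V : Type*} (X : Finset V) := {x : V // x ∈ X} → Fin D

/-- Splitting a configuration into its parts on `X` and on the complement of `X`. -/
def cfgSplit (D : ℕ) (X : Finset V) :
    Cfg V D ≃ ({x : V // x ∈ X} → Fin D) × ({x : V // ¬ x ∈ X} → Fin D) :=
  Equiv.piEquivPiSubtypeProd (fun x => x ∈ X) fun _ => Fin D

/-- The reduced state `ρ_X = tr_{V∖X} ρ` on the region `X`. -/
def reduce (X : Finset V) (ρ : Matrix (Cfg V D) (Cfg V D) ℂ) :
    Matrix (CfgOn D X) (CfgOn D X) ℂ := fun a b =>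
  ∑ h : {x : V // ¬ x ∈ X} → Fin D,
    ρ ((cfgSplit D X).symm (a, h)) ((cfgSplit D X).symm (b, h))

/-- The embedding `P ↦ P ⊗ 𝟙` of an operator on region `X` into the full system. -/
def embed (X : Finset V) (P : Matrix (CfgOn D X) (CfgOn D X) ℂ) :
    Matrix (Cfg V D) (Cfg V D) ℂ :=
  Matrix.submatrix (P ⊗ₖ (1 : Matrix ({x : V // ¬ x ∈ X} → Fin D) ({x : V // ¬ x ∈ X} → Fin D) ℂ))
    (cfgSplit D X) (cfgSplit D X)

/-- An operator acts only on the region `X` if it is of the form `P ⊗ 𝟙`. -/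
def ActsOn (A : Matrix (Cfg V D) (Cfg V D) ℂ) (X : Finset V) : Prop :=
  ∃ P, A = embed X P

/-- The correlation
`cor_ρ(X,Y) = max |tr((P⊗Q)(ρ_{XY} − ρ_X ⊗ ρ_Y))|` over `‖P‖,‖Q‖ ≤ 1` supported on
`X` resp. `Y`; expressed via operators embedded in the full system (for disjoint
`X`, `Y`, `tr((P⊗Q)ρ_{XY}) = tr(P̂ Q̂ ρ)` and `tr((P⊗Q)(ρ_X⊗ρ_Y)) = tr(P̂ρ) tr(Q̂ρ)`). -/
def corr (ρ : Matrix (Cfg V D) (Cfg V D) ℂ) (X Y : Finset V) : ℝ :=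
  sSup {r : ℝ | ∃ (P : Matrix (CfgOn D X) (CfgOn D X) ℂ) (Q : Matrix (CfgOn D Y) (CfgOn D Y) ℂ),
    opNorm P ≤ 1 ∧ opNorm Q ≤ 1 ∧
    r = ‖(embed X P * embed Y Q * ρ).trace -
          (embed X P * ρ).trace * (embed Y Q * ρ).trace‖}

/-- The product state `⊗_{v ∈ V} ρ_v` of single-site states. -/
def prodState (ρs : V → Matrix (Fin D) (Fin D) ℂ) : Matrix (Cfg V D) (Cfg V D) ℂ :=
  fun f g => ∏ v, ρs v (f v) (g v)

/-- The single-site reduced state `ρ_{\{v\}}` as a `D×D` matrix. -/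
def reduce1 (v : V) (ρ : Matrix (Cfg V D) (Cfg V D) ℂ) : Matrix (Fin D) (Fin D) ℂ :=
  fun a b => ∑ h : {x : V // x ≠ v} → Fin D,
    ρ (fun x => if hx : x = v then a else h ⟨x, hx⟩)
      (fun x => if hx : x = v then b else h ⟨x, hx⟩)

/-- The tensor product `⊗_j ρ_j` of states on pairwise disjoint regions `C j`,
as a state on the union of the regions. -/
def tensorOver {M : ℕ} (C : Fin M → Finset V)
    (ρs : ∀ j, Matrix (CfgOn D (C j)) (CfgOn D (C j)) ℂ) :
    Matrix (CfgOn D (Finset.univ.biUnion C)) (CfgOn D (Finset.univ.biUnion C)) ℂ :=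
  fun f g => ∏ j, ρs j
    (fun x => f ⟨x.1, Finset.mem_biUnion.mpr ⟨j, Finset.mem_univ j, x.2⟩⟩)
    (fun x => g ⟨x.1, Finset.mem_biUnion.mpr ⟨j, Finset.mem_univ j, x.2⟩⟩)


/-! ### The lattice `Λ = {1,…,n}^d` -/

/-- A site of the lattice `Λ = {1,…,n}^d`. -/
abbrev Site (d n : ℕ) := Fin d → Fin n

/-- Manhattan distance between two lattice sites. -/
def siteDist {d n : ℕ} (x y : Site d n) : ℕ := ∑ a, ((x a : ℤ) - (y a : ℤ)).natAbs

/-- Distance between two regions of the lattice. -/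
def setDist {d n : ℕ} (X Y : Finset (Site d n)) : ℕ :=
  sInf {m | ∃ x ∈ X, ∃ y ∈ Y, siteDist x y = m}

/-- The ball of radius `k` around site `i` (in Manhattan distance). -/
def ball {d n : ℕ} (i : Site d n) (k : ℕ) : Finset (Site d n) :=
  Finset.univ.filter fun j => siteDist i j ≤ k

/-- The hypercube with edge length `l` and corner `c`. -/
def cube {d n : ℕ} (l : ℕ) (c : Fin d → Fin (n - l + 1)) : Finset (Site d n) :=
  Finset.univ.filter fun x => ∀ a, (c a : ℕ) ≤ (x a : ℕ) ∧ (x a : ℕ) < (c a : ℕ) + l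

/-- The uniform average over all hypercubes of edge length `l` contained in the lattice. -/
def cubeAvg {d n : ℕ} (l : ℕ) (f : Finset (Site d n) → ℝ) : ℝ :=
  (∑ c : Fin d → Fin (n - l + 1), f (cube l c)) / ((n - l + 1) ^ d : ℕ)


/-- The nonnegative real branch of the Lambert `W` function: for `x ≥ 0`,
`W x` is the unique `w ≥ 0` with `w e^w = x`. -/
def lambertW (x : ℝ) : ℝ := sSup {w : ℝ | 0 ≤ w ∧ w * Real.exp w ≤ x}

/-- The quantity `Δ_{k,ξ,z,T}` (with `C` the dimension-dependent constant, `c = c(T)`). -/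
def DeltaBE (C : ℝ) (d k : ℕ) (ξ z T c : ℝ) (N : ℕ) : ℝ :=
  C * (max (k : ℝ) ξ * (z + 1)) ^ (2 * d) / Real.sqrt (T ^ 2 * c) *
    max (1 / (max (k : ℝ) ξ * (z + 1) * Real.log N)) (1 / (T ^ 2 * c))


/-! ### Local Hamiltonians and decaying correlations on the lattice -/

variable {d n D : ℕ}

/-- The state `ρ` has `(ξ,z)`-exponentially decaying correlations. -/
def HasDecay (ρ : Matrix (Cfg (Site d n) D) (Cfg (Site d n) D) ℂ) (ξ z : ℝ) : Prop :=
  ∀ X Y : Finset (Site d n), 0 < setDist X Y →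
    corr ρ X Y ≤ ((n ^ d : ℕ) : ℝ) ^ z * Real.exp (-(setDist X Y : ℝ) / ξ)

/-- The family `Hloc` of local terms is a `k`-local Hamiltonian: each term has norm
at most one and acts only on sites at distance at most `k` from its center. -/
def IsKLocal (Hloc : Site d n → Matrix (Cfg (Site d n) D) (Cfg (Site d n) D) ℂ)
    (k : ℕ) : Prop :=
  ∀ i, opNorm (Hloc i) ≤ 1 ∧ ActsOn (Hloc i) (ball i k)


/-! ### Miscellaneous -/

/-- Reduction of a state on a dependent tensor product `⊗_j H_{A_j}` to the `j`-th factor. -/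
def reduceAt {M : ℕ} {ι : Fin M → Type*} [∀ j, Fintype (ι j)] [∀ j, DecidableEq (ι j)]
    (j : Fin M) (π : Matrix (∀ i, ι i) (∀ i, ι i) ℂ) : Matrix (ι j) (ι j) ℂ :=
  fun a b => ∑ f : ∀ i, ι i, ∑ g : ∀ i, ι i,
    if f j = a ∧ g j = b ∧ ∀ i, i ≠ j → f i = g i then π f g else 0

/-- The tensor product `ρ₁ ⊗ ⋯ ⊗ ρ_M` on a dependent tensor product `⊗_j H_{A_j}`. -/
def prodDep {M : ℕ} {ι : Fin M → Type*} [∀ j, Fintype (ι j)] [∀ j, DecidableEq (ι j)]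
    (ρs : ∀ j, Matrix (ι j) (ι j) ℂ) : Matrix (∀ i, ι i) (∀ i, ι i) ℂ :=
  fun f g => ∏ j, ρs j (f j) (g j)

/-- The pure state `|ψ⟩⟨ψ|` where `ψ = Σ_{ν ∈ M} c_ν |ν⟩` is the vector of the span of
the eigenvectors `{|ν⟩ : ν ∈ M}` with coordinate vector `c`. -/
def pureFromCoords {ι : Type*} [Fintype ι] [DecidableEq ι] {A : Matrix ι ι ℂ}
    (hA : A.IsHermitian) (M : Finset ι) (c : EuclideanSpace ℂ {ν // ν ∈ M}) :
    Matrix ι ι ℂ :=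
  Matrix.vecMulVec
    (fun x => ∑ ν : {ν // ν ∈ M}, c ν * (hA.eigenvectorUnitary : Matrix ι ι ℂ) x ν.1)
    (fun y => starRingEnd ℂ
      (∑ ν : {ν // ν ∈ M}, c ν * (hA.eigenvectorUnitary : Matrix ι ι ℂ) y ν.1))


open scoped Matrix

/-!
Write `S = (Y + Δ)^{1/2}` and `P = S⁺`. For Hermitian `S` the Moore–Penrose pseudo-inverse is
`cfc (·⁻¹) S`, because `0⁻¹ = 0` in `ℝ`; hence `P S = P S² P` is the projection onto the range
of `S`, and `1 - P S` annihilates `S`. From `π̃ ≤ S²` we get `(1 - P S) π̃ (1 - P S) = 0`, so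
`π̃ = P S π̃` lives on the range of `S`. Now `T = Y^{1/2} P`, and
`T π̃ T† = Y^{1/2} (P π̃ P) Y^{1/2} ≤ Y^{1/2} (P S² P) Y^{1/2} ≤ Y`, while
`T† T = P Y P = P S - P Δ P` gives
`tr (T† T π̃) = 1 - tr (P Δ P π̃) ≥ 1 - tr (P Δ P S²) = 1 - tr (Δ P S) ≥ 1 - tr Δ`.
-/

open scoped MatrixOrder

section LoewnerOrder

open Matrix

variable {m 𝕜 : Type*} [Fintype m] [RCLike 𝕜]

lemma _root_.Matrix.mul_eq_zero_of_mul_mul_conjTranspose_eq_zero {l : Type*} [Fintype l]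
    {A : Matrix m m 𝕜} (hA : 0 ≤ A) {B : Matrix l m 𝕜} (h : B * A * Bᴴ = 0) : B * A = 0 := by
  classical
  obtain ⟨X, rfl⟩ := CStarAlgebra.nonneg_iff_eq_star_mul_self.mp hA
  rw [star_eq_conjTranspose] at h ⊢
  rw [mul_conjTranspose_mul_self_eq_zero, ← self_mul_conjTranspose_eq_zero, conjTranspose_mul,
    conjTranspose_conjTranspose, ← h]
  simp only [Matrix.mul_assoc]

lemma _root_.Matrix.trace_mul_nonneg {A B : Matrix m m 𝕜} (hA : 0 ≤ A) (hB : 0 ≤ B) :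
    0 ≤ (A * B).trace := by
  classical
  obtain ⟨X, rfl⟩ := CStarAlgebra.nonneg_iff_eq_star_mul_self.mp hA
  rw [star_eq_conjTranspose, Matrix.mul_assoc, trace_mul_comm]
  exact ((nonneg_iff_posSemidef.mp hB).mul_mul_conjTranspose_same X).trace_nonneg

lemma _root_.Matrix.trace_mul_le_trace_mul {A B C : Matrix m m 𝕜} (hA : 0 ≤ A)
    (hBC : B ≤ C) : (A * B).trace ≤ (A * C).trace := by
  rw [← sub_nonneg, ← trace_sub, ← Matrix.mul_sub]
  exact trace_mul_nonneg hA (sub_nonneg.mpr hBC)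

end LoewnerOrder

section FunctionalCalculus

open Matrix

variable {m 𝕜 : Type*} [Fintype m] [DecidableEq m] [RCLike 𝕜]

lemma _root_.Matrix.PosSemidef.sqrt_eq_cfcSqrt {A : Matrix m m 𝕜} (hA : A.PosSemidef) :
    hA.sqrt = CFC.sqrt A := by
  rw [CFC.sqrt_eq_real_sqrt A hA.nonneg, cfcₙ_eq_cfc, hA.1.cfc_eq]
  rfl

lemma mfun_eq_cfc {A : Matrix ι ι ℂ} (hA : A.IsHermitian) (f : ℝ → ℝ) : mfun f A = cfc f A := by
  rw [hA.cfc_eq, mfun, dif_pos hA]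
  rfl

lemma _root_.Matrix.cfc_mul_cfc (A : Matrix m m 𝕜) (f g : ℝ → ℝ) :
    cfc f A * cfc g A = cfc (fun x => f x * g x) A :=
  (cfc_mul f g A (A.finite_real_spectrum.continuousOn f)
    (A.finite_real_spectrum.continuousOn g)).symm

variable {S : Matrix m m 𝕜} (hS : S.IsHermitian)
include hS

lemma _root_.Matrix.IsHermitian.cfc_mul_self (f : ℝ → ℝ) :
    cfc f S * S = cfc (fun x => f x * x) S := by
  simpa only [cfc_id' ℝ S hS.isSelfAdjoint] using S.cfc_mul_cfc f (fun x => x)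

lemma _root_.Matrix.IsHermitian.cfc_inv_mul_mul_self_mul_cfc_inv :
    cfc (fun x : ℝ => x⁻¹) S * (S * S) * cfc (fun x : ℝ => x⁻¹) S =
      cfc (fun x : ℝ => x⁻¹) S * S := by
  simp only [← Matrix.mul_assoc, hS.cfc_mul_self, S.cfc_mul_cfc]
  refine cfc_congr fun x _ => ?_
  rcases eq_or_ne x 0 with rfl | hx
  · simp
  · field_simp

lemma _root_.Matrix.IsHermitian.cfc_inv_mul_self_mul_self :
    cfc (fun x : ℝ => x⁻¹) S * S * S = S := by
  rw [hS.cfc_mul_self, hS.cfc_mul_self]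
  nth_rw 2 [← cfc_id' ℝ S hS.isSelfAdjoint]
  refine cfc_congr fun x _ => ?_
  rcases eq_or_ne x 0 with rfl | hx
  · simp
  · field_simp

lemma _root_.Matrix.IsHermitian.cfc_inv_mul_self_le_one :
    cfc (fun x : ℝ => x⁻¹) S * S ≤ 1 := by
  rw [hS.cfc_mul_self]
  refine cfc_le_one _ _ fun x _ => ?_
  rcases eq_or_ne x 0 with rfl | hx
  · simp
  · simp [hx]

lemma _root_.Matrix.IsHermitian.cfc_inv_mul_self_mul_of_le_mul_self {π : Matrix m m 𝕜}
    (hπ₀ : 0 ≤ π) (hπ : π ≤ S * S) : cfc (fun x : ℝ => x⁻¹) S * S * π = π := by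
  set Q := 1 - cfc (fun x : ℝ => x⁻¹) S * S with hQ
  have hQS : Q * S = 0 := by
    rw [hQ, Matrix.sub_mul, Matrix.one_mul, hS.cfc_inv_mul_self_mul_self, sub_self]
  have hQπQ : Q * π * star Q = 0 := by
    refine le_antisymm ?_ (star_right_conjugate_nonneg hπ₀ Q)
    calc Q * π * star Q ≤ Q * (S * S) * star Q := star_right_conjugate_le_conjugate hπ Q
      _ = 0 := by rw [← Matrix.mul_assoc, hQS, Matrix.zero_mul, Matrix.zero_mul]
  have hQπ := mul_eq_zero_of_mul_mul_conjTranspose_eq_zero hπ₀ hQπQ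
  rwa [hQ, Matrix.sub_mul, Matrix.one_mul, sub_eq_zero, eq_comm] at hQπ

lemma _root_.Matrix.IsHermitian.cfc_inv_mul_mul_cfc_inv_le_one {π : Matrix m m 𝕜}
    (hπ : π ≤ S * S) : cfc (fun x : ℝ => x⁻¹) S * π * cfc (fun x : ℝ => x⁻¹) S ≤ 1 :=
  calc _ ≤ cfc (fun x : ℝ => x⁻¹) S * (S * S) * cfc (fun x : ℝ => x⁻¹) S :=
        IsSelfAdjoint.conjugate_le_conjugate hπ .cfc
    _ = cfc (fun x : ℝ => x⁻¹) S * S := hS.cfc_inv_mul_mul_self_mul_cfc_inv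
    _ ≤ 1 := hS.cfc_inv_mul_self_le_one

lemma _root_.Matrix.IsHermitian.trace_cfc_inv_mul_mul_cfc_inv_mul_le {Δ π : Matrix m m 𝕜}
    (hΔ : 0 ≤ Δ) (hπ : π ≤ S * S) :
    (cfc (fun x : ℝ => x⁻¹) S * Δ * cfc (fun x : ℝ => x⁻¹) S * π).trace ≤ Δ.trace := by
  set P := cfc (fun x : ℝ => x⁻¹) S
  calc (P * Δ * P * π).trace ≤ (P * Δ * P * (S * S)).trace :=
        trace_mul_le_trace_mul (IsSelfAdjoint.conjugate_nonneg hΔ .cfc) hπ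
    _ = (Δ * (P * (S * S) * P)).trace := by
        rw [Matrix.mul_assoc P Δ, Matrix.mul_assoc P, trace_mul_comm P]
        simp only [Matrix.mul_assoc]
    _ ≤ (Δ * 1).trace := by
        rw [hS.cfc_inv_mul_mul_self_mul_cfc_inv]
        exact trace_mul_le_trace_mul hΔ hS.cfc_inv_mul_self_le_one
    _ = Δ.trace := by rw [Matrix.mul_one]

variable {R π : Matrix m m 𝕜} (hR : IsSelfAdjoint R)
include hR

lemma _root_.Matrix.IsHermitian.mul_cfc_inv_conj_le_mul_self (hπ : π ≤ S * S) :
    R * cfc (fun x : ℝ => x⁻¹) S * π * (R * cfc (fun x : ℝ => x⁻¹) S)ᴴ ≤ R * R := by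
  set P := cfc (fun x : ℝ => x⁻¹) S
  have hP : Pᴴ = P := IsSelfAdjoint.cfc.star_eq
  calc R * P * π * (R * P)ᴴ = R * (P * π * P) * R := by
        rw [conjTranspose_mul, hP, ← star_eq_conjTranspose, hR.star_eq]
        simp only [Matrix.mul_assoc]
    _ ≤ R * 1 * R := hR.conjugate_le_conjugate (hS.cfc_inv_mul_mul_cfc_inv_le_one hπ)
    _ = R * R := by rw [Matrix.mul_one]

lemma _root_.Matrix.IsHermitian.trace_sub_trace_le_trace_mul_cfc_inv_conj {Δ : Matrix m m 𝕜}
    (hΔ : 0 ≤ Δ) (hπ₀ : 0 ≤ π) (hπ : π ≤ S * S) (hSS : S * S = R * R + Δ) :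
    π.trace - Δ.trace ≤
      ((R * cfc (fun x : ℝ => x⁻¹) S)ᴴ * (R * cfc (fun x : ℝ => x⁻¹) S) * π).trace := by
  set P := cfc (fun x : ℝ => x⁻¹) S
  have hP : Pᴴ = P := IsSelfAdjoint.cfc.star_eq
  have hTT : (R * P)ᴴ * (R * P) = P * S - P * Δ * P := calc
    _ = P * (R * R) * P := by
      rw [conjTranspose_mul, hP, ← star_eq_conjTranspose, hR.star_eq]
      simp only [Matrix.mul_assoc]
    _ = P * (S * S) * P - P * Δ * P := by
      rw [eq_sub_of_add_eq hSS.symm, Matrix.mul_sub, Matrix.sub_mul]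
    _ = P * S - P * Δ * P := by rw [hS.cfc_inv_mul_mul_self_mul_cfc_inv]
  rw [hTT, Matrix.sub_mul, trace_sub, hS.cfc_inv_mul_self_mul_of_le_mul_self hπ₀ hπ]
  exact sub_le_sub_left (hS.trace_cfc_inv_mul_mul_cfc_inv_mul_le hΔ hπ) _

end FunctionalCalculus

/-- first part of the proof of Lemma 5: properties of the operator
`T = Y^{1/2} ((Y+Δ)^{1/2})⁺`. -/
theorem statement_12 {ι : Type*} [Fintype ι] [DecidableEq ι]
    (Y Δ πt : Matrix ι ι ℂ) (hY : Y.PosSemidef) (hΔ : Δ.PosSemidef)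
    (hπt : IsDensity πt) (hle : (Y + Δ - πt).PosSemidef)
    (T : Matrix ι ι ℂ) (hT : T = hY.sqrt * hpinv (hY.add hΔ).sqrt) :
    (Y - T * πt * Tᴴ).PosSemidef ∧
    ((1 - Tᴴ * T) * πt).trace.re ≤ Δ.trace.re ∧
    1 - Δ.trace.re ≤ (Tᴴ * T * πt).trace.re := by
  obtain ⟨hπ₀, hπ_tr⟩ := hπt
  have hR : IsSelfAdjoint (CFC.sqrt Y) := (CFC.sqrt_nonneg Y).isSelfAdjoint
  have hS : (CFC.sqrt (Y + Δ)).IsHermitian := (CFC.sqrt_nonneg (Y + Δ)).isSelfAdjoint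
  have hSS : CFC.sqrt (Y + Δ) * CFC.sqrt (Y + Δ) = CFC.sqrt Y * CFC.sqrt Y + Δ := by
    rw [CFC.sqrt_mul_sqrt_self _ (hY.add hΔ).nonneg, CFC.sqrt_mul_sqrt_self _ hY.nonneg]
  have hπ : πt ≤ CFC.sqrt (Y + Δ) * CFC.sqrt (Y + Δ) := by
    rwa [CFC.sqrt_mul_sqrt_self _ (hY.add hΔ).nonneg]
  rw [hY.sqrt_eq_cfcSqrt, (hY.add hΔ).sqrt_eq_cfcSqrt, hpinv, mfun_eq_cfc hS] at hT
  subst hT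
  have htr := (Complex.le_def.mp <|
    hS.trace_sub_trace_le_trace_mul_cfc_inv_conj hR hΔ.nonneg hπ₀.nonneg hπ hSS).1
  rw [Complex.sub_re, hπ_tr, Complex.one_re] at htr
  refine ⟨?_, ?_, htr⟩
  · have hconj := hS.mul_cfc_inv_conj_le_mul_self hR hπ
    rwa [CFC.sqrt_mul_sqrt_self Y hY.nonneg] at hconj
  · rw [Matrix.sub_mul, Matrix.one_mul, Matrix.trace_sub, hπ_tr, Complex.sub_re, Complex.one_re]
    linarith
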